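/- arXiv:2508.02010 — 5 statements merged into one kernel-verified Lean document; each statement's English description precedes it below -/
import Mathlib

section
/- Let Γ be a bipartite graph with parts X and Y, where |X| = n and |Y| = α ≥ 2. Suppose each vertex in Y has on average w neighbors in X. Then there exist two distinct vertices y₁, y₂ ∈ Y having at least (w/n)(w - (n-w)/(α-1)) common neighbors. -/
/-!
Count the triples `(y₁, y₂, x)` with `y₁ ≠ y₂` in `Y` and `x` a common neighbour: if `x ∈ X` has
`d x` neighbours in `Y`, then `∑_{y₁ ≠ y₂} |N y₁ ∩ N y₂| = ∑_x d x (d x - 1)`, while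
`∑_x d x = α w`. By Cauchy–Schwarz the right side is at least `(α w)² / n - α w`, which is
`α (α - 1)` times the claimed bound, so some ordered pair `y₁ ≠ y₂` reaches the average.
-/

open Finset

namespace Finset

variable {ι β : Type*} [DecidableEq β] {s : Finset ι} {A : ι → Finset β} {X : Finset β}

theorem sum_card_filter_mem_eq_sum_card (hA : ∀ i ∈ s, A i ⊆ X) :
    ∑ x ∈ X, #{i ∈ s | x ∈ A i} = ∑ i ∈ s, #(A i) := by
  calc ∑ x ∈ X, #{i ∈ s | x ∈ A i}
      = ∑ i ∈ s, #(X.bipartiteAbove (fun i x => x ∈ A i) i) :=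
        (sum_card_bipartiteAbove_eq_sum_card_bipartiteBelow _).symm
    _ = ∑ i ∈ s, #(A i) := sum_congr rfl fun i hi => by
        rw [bipartiteAbove, filter_mem_eq_inter, inter_eq_right.mpr (hA i hi)]

theorem sum_card_offDiag_filter_mem_eq_sum_card_inter [DecidableEq ι] (hA : ∀ i ∈ s, A i ⊆ X) :
    ∑ x ∈ X, #{i ∈ s | x ∈ A i}.offDiag = ∑ p ∈ s.offDiag, #(A p.1 ∩ A p.2) := by
  have hfiber (x : β) : {i ∈ s | x ∈ A i}.offDiag = {p ∈ s.offDiag | x ∈ A p.1 ∩ A p.2} := by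
    ext p
    simp only [mem_offDiag, mem_filter, mem_inter]
    tauto
  calc ∑ x ∈ X, #{i ∈ s | x ∈ A i}.offDiag
      = ∑ p ∈ s.offDiag, #(X.bipartiteAbove (fun p x => x ∈ A p.1 ∩ A p.2) p) := by
        simp only [hfiber]
        exact (sum_card_bipartiteAbove_eq_sum_card_bipartiteBelow _).symm
    _ = ∑ p ∈ s.offDiag, #(A p.1 ∩ A p.2) := sum_congr rfl fun p hp => by
        have hsub : A p.1 ∩ A p.2 ⊆ X := inter_subset_left.trans (hA _ (mem_offDiag.mp hp).1)
        rw [bipartiteAbove, filter_mem_eq_inter, inter_eq_right.mpr hsub]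

theorem cast_card_offDiag {R : Type*} [Ring R] {ι : Type*} [DecidableEq ι] (t : Finset ι) :
    (#t.offDiag : R) = #t ^ 2 - #t := by
  rw [offDiag_card, Nat.cast_sub (Nat.le_mul_self _), Nat.cast_mul, sq]

variable {𝕜 : Type*} [Field 𝕜] [LinearOrder 𝕜] [IsStrictOrderedRing 𝕜] [DecidableEq ι]

theorem sq_sum_card_div_card_sub_sum_card_le_sum_card_inter (hA : ∀ i ∈ s, A i ⊆ X) :
    (∑ i ∈ s, (#(A i) : 𝕜)) ^ 2 / #X - ∑ i ∈ s, (#(A i) : 𝕜) ≤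
      ∑ p ∈ s.offDiag, (#(A p.1 ∩ A p.2) : 𝕜) := by
  have hpairs := congrArg (Nat.cast (R := 𝕜)) (sum_card_offDiag_filter_mem_eq_sum_card_inter hA)
  have hsum := congrArg (Nat.cast (R := 𝕜)) (sum_card_filter_mem_eq_sum_card hA)
  push_cast [cast_card_offDiag] at hpairs hsum
  rw [← hpairs, ← hsum, sum_sub_distrib]
  gcongr
  simpa only [zero_add, pow_one] using
    pow_sum_div_card_le_sum_pow (fun x _ => Nat.cast_nonneg (α := 𝕜) #{i ∈ s | x ∈ A i}) 1

theorem exists_ne_le_card_inter (hA : ∀ i ∈ s, A i ⊆ X) (hs : 2 ≤ #s) {w : 𝕜}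
    (hw : ∑ i ∈ s, (#(A i) : 𝕜) = #s * w) :
    ∃ i ∈ s, ∃ j ∈ s, i ≠ j ∧ w / #X * (w - (#X - w) / (#s - 1)) ≤ #(A i ∩ A j) := by
  set T := w / #X * (w - (#X - w) / (#s - 1))
  have hs₁ : (#s - 1 : 𝕜) ≠ 0 := sub_ne_zero.mpr (by exact_mod_cast (one_lt_two.trans_le hs).ne')
  have hT : ∑ _p ∈ s.offDiag, T ≤ ∑ p ∈ s.offDiag, (#(A p.1 ∩ A p.2) : 𝕜) := by
    rw [sum_const, nsmul_eq_mul, cast_card_offDiag]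
    rcases eq_or_ne (#X : 𝕜) 0 with hX | hX
    · simp only [T, hX, div_zero, zero_mul, mul_zero]
      positivity
    · calc (#s ^ 2 - #s) * T = (#s * w) ^ 2 / #X - #s * w := by
            simp only [T]
            field_simp
            ring
        _ ≤ _ := hw ▸ sq_sum_card_div_card_sub_sum_card_le_sum_card_inter hA
  obtain ⟨a, ha, b, hb, hab⟩ := one_lt_card.mp hs
  obtain ⟨p, hp, hle⟩ := exists_le_of_sum_le ⟨(a, b), mem_offDiag.mpr ⟨ha, hb, hab⟩⟩ hT
  obtain ⟨hp₁, hp₂, hne⟩ := mem_offDiag.mp hp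
  exact ⟨p.1, hp₁, p.2, hp₂, hne, hle⟩

end Finset

theorem stmt0_general {V : Type*} [Fintype V] [DecidableEq V] (G : SimpleGraph V) [DecidableRel G.Adj]
    (X Y : Finset V) (n α : ℕ) (w : ℚ)
    (hdisj : Disjoint X Y)
    (hbip : ∀ u v, G.Adj u v → (u ∈ X ∧ v ∈ Y) ∨ (u ∈ Y ∧ v ∈ X))
    (hX : X.card = n) (hY : Y.card = α) (hα : 2 ≤ α)
    (havg : (∑ y ∈ Y, (G.degree y : ℚ)) = (α : ℚ) * w) :
    ∃ y₁ ∈ Y, ∃ y₂ ∈ Y, y₁ ≠ y₂ ∧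
      ((G.neighborFinset y₁ ∩ G.neighborFinset y₂).card : ℚ) ≥
        (w / n) * (w - ((n : ℚ) - w) / ((α : ℚ) - 1)) := by
  have hG : G.IsBipartiteWith X Y := ⟨disjoint_coe.mpr hdisj, fun u v h => hbip u v h⟩
  subst hX hY
  simp only [← SimpleGraph.card_neighborFinset_eq_degree] at havg
  exact exists_ne_le_card_inter
    (fun _ hy => SimpleGraph.isBipartiteWith_neighborFinset_subset' hG hy) hα havg

/-- In a bipartite graph with parts `X` (of size `n`) and `Y` (of size `α ≥ 2`),
if each vertex of `Y` has on average `w` neighbors (all lying in `X`), then some two distinct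
vertices of `Y` have at least `(w/n)(w - (n-w)/(α-1))` common neighbors. -/
theorem stmt0 {V : Type*} [Fintype V] [DecidableEq V] (G : SimpleGraph V) [DecidableRel G.Adj]
    (X Y : Finset V) (n α : ℕ) (w : ℚ)
    (hdisj : Disjoint X Y) (hcover : X ∪ Y = Finset.univ)
    (hbip : ∀ u v, G.Adj u v → (u ∈ X ∧ v ∈ Y) ∨ (u ∈ Y ∧ v ∈ X))
    (hX : X.card = n) (hY : Y.card = α) (hα : 2 ≤ α)
    (havg : (∑ y ∈ Y, (G.degree y : ℚ)) = (α : ℚ) * w) :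
    ∃ y₁ ∈ Y, ∃ y₂ ∈ Y, y₁ ≠ y₂ ∧
      ((G.neighborFinset y₁ ∩ G.neighborFinset y₂).card : ℚ) ≥
        (w / n) * (w - ((n : ℚ) - w) / ((α : ℚ) - 1)) :=
  stmt0_general G X Y n α w hdisj hbip hX hY hα havg
end

section
/- Let Γ be a connected amply regular graph with diameter d ≥ 4 and parameters (v, k, λ, μ) where k ≥ 5 is odd and μ = (k-1)/2. Then λ = 0. -/
/-!
Choose `p, w, q` with `d(p, w) = d(w, q) = 2` and `d(p, q) = 4`. The sets `A = Γ(p) ∩ Γ(w)` and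
`B = Γ(q) ∩ Γ(w)` have `μ` elements each, are disjoint and have no edges between them, so
`k = 2μ + 1` forces `Γ(w) = A ⊔ B ⊔ {x}`. The `λ` common neighbours of `a ∈ A` and `w` lie in
`(A \ {a}) ∪ {x}`, hence `λ ≤ μ`, and `λ = μ` would make `x` adjacent to all `2μ` vertices of
`A ∪ B`; so `λ < μ`. On the other hand, counting edges between `Γ(u)` and `Γ₂(u)` gives
`μ |Γ₂(u)| = k (k - λ - 1)`, and since `k ≡ 1 (mod μ)` this forces `μ ∣ λ`.
-/

lemma Set.exists_mem_subset_insert_of_ncard_eq_add_one {α : Type*} {s t : Set α} (hts : t ⊆ s)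
    (hcard : s.ncard = t.ncard + 1) (hs : s.Finite := by toFinite_tac) :
    ∃ x ∈ s, s ⊆ insert x t := by
  obtain ⟨x, hx⟩ : ∃ x, s \ t = {x} :=
    Set.ncard_eq_one.mp (by rw [Set.ncard_sdiff hts (hs.subset hts), hcard]; omega)
  have hxst : x ∈ s \ t := hx ▸ rfl
  refine ⟨x, hxst.1, fun z hz ↦ ?_⟩
  by_cases hzt : z ∈ t
  · exact Or.inr hzt
  · have hzst : z ∈ s \ t := ⟨hz, hzt⟩
    rw [hx] at hzst
    exact Or.inl hzst

namespace SimpleGraph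

variable {V : Type*} {G : SimpleGraph V}

lemma Reachable.exists_dist_eq_dist_eq {u v : V} (h : G.Reachable u v) {m : ℕ}
    (hm : m ≤ G.dist u v) : ∃ w, G.dist u w = m ∧ G.dist w v = G.dist u v - m := by
  obtain ⟨p, hp⟩ := h.exists_walk_length_eq_dist
  have htake := dist_le (p.take m)
  have hdrop := dist_le (p.drop m)
  have htri := (p.take m).reachable.dist_triangle_left v
  rw [Walk.take_length] at htake
  rw [Walk.drop_length] at hdrop
  exact ⟨p.getVert m, by omega, by omega⟩

lemma dist_le_two_of_adj_of_adj {u w v : V} (h₁ : G.Adj u w) (h₂ : G.Adj w v) :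
    G.dist u v ≤ 2 :=
  dist_le (.cons h₁ (.cons h₂ .nil))

lemma dist_le_three_of_adj_of_adj_of_adj {u a b v : V} (h₁ : G.Adj u a) (h₂ : G.Adj a b)
    (h₃ : G.Adj b v) : G.dist u v ≤ 3 :=
  dist_le (.cons h₁ (.cons h₂ (.cons h₃ .nil)))

lemma dist_eq_two_iff_of_adj_of_adj {u w v : V} (h₁ : G.Adj u w) (h₂ : G.Adj w v) :
    G.dist u v = 2 ↔ u ≠ v ∧ ¬G.Adj u v := by
  refine ⟨fun h ↦ ⟨?_, fun huv ↦ ?_⟩, fun ⟨hne, hnadj⟩ ↦ ?_⟩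
  · rintro rfl
    simp at h
  · rw [dist_eq_one_iff_adj.mpr huv] at h
    omega
  · have := (h₁.reachable.trans h₂.reachable).one_lt_dist_of_ne_of_not_adj hne hnadj
    have := dist_le_two_of_adj_of_adj h₁ h₂
    omega

lemma neighborSet_inter_subset_insert_sdiff {A B : Set V} {w x a : V}
    (hcover : G.neighborSet w ⊆ insert x (A ∪ B)) (haB : ∀ b ∈ B, ¬G.Adj a b) :
    G.neighborSet a ∩ G.neighborSet w ⊆ insert x (A \ {a}) := by
  rintro z ⟨haz, hwz⟩
  rcases hcover hwz with rfl | hzA | hzB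
  · exact Set.mem_insert _ _
  · exact Or.inr ⟨hzA, (G.ne_of_adj haz).symm⟩
  · exact absurd haz (haB z hzB)

section CommonNeighbors

variable [Finite V]

lemma adj_of_ncard_le_ncard_neighborSet_inter {A : Set V} {w x a : V} (ha : a ∈ A)
    (hsub : G.neighborSet a ∩ G.neighborSet w ⊆ insert x (A \ {a}))
    (hle : A.ncard ≤ (G.neighborSet a ∩ G.neighborSet w).ncard) : G.Adj a x := by
  by_contra hax
  have hsub' : G.neighborSet a ∩ G.neighborSet w ⊆ A \ {a} := fun z hz ↦
    (hsub hz).resolve_left (by rintro rfl; exact hax hz.1)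
  have := Set.ncard_le_ncard hsub'
  have := Set.ncard_sdiff_singleton_lt_of_mem ha
  omega

theorem lam_lt_mu_of_three_lt_dist {lam mu : ℕ} {p w q : V} (hmu : 0 < mu)
    (hdeg : (G.neighborSet w).ncard = 2 * mu + 1)
    (hlam : ∀ u v, G.Adj u v → (G.neighborSet u ∩ G.neighborSet v).ncard = lam)
    (hpw : (G.neighborSet p ∩ G.neighborSet w).ncard = mu)
    (hqw : (G.neighborSet q ∩ G.neighborSet w).ncard = mu) (hpq : 3 < G.dist p q) :
    lam < mu := by
  set A := G.neighborSet p ∩ G.neighborSet w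
  set B := G.neighborSet q ∩ G.neighborSet w
  have hAB : ∀ a ∈ A, ∀ b ∈ B, ¬G.Adj a b := fun a ha b hb hab ↦ by
    have := dist_le_three_of_adj_of_adj_of_adj ha.1 hab (G.adj_symm hb.1)
    omega
  have hdisj : Disjoint A B := Set.disjoint_left.mpr fun a ha hb ↦ by
    have := dist_le_two_of_adj_of_adj ha.1 (G.adj_symm hb.1)
    omega
  have hsub : A ∪ B ⊆ G.neighborSet w := Set.union_subset (fun _ h ↦ h.2) (fun _ h ↦ h.2)
  obtain ⟨x, hxw, hcover⟩ := Set.exists_mem_subset_insert_of_ncard_eq_add_one hsub <| by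
    rw [hdeg, Set.ncard_union_eq hdisj, hpw, hqw]
    omega
  have hsubA : ∀ a ∈ A, G.neighborSet a ∩ G.neighborSet w ⊆ insert x (A \ {a}) :=
    fun a ha ↦ neighborSet_inter_subset_insert_sdiff hcover (hAB a ha)
  have hsubB : ∀ b ∈ B, G.neighborSet b ∩ G.neighborSet w ⊆ insert x (B \ {b}) :=
    fun b hb ↦ neighborSet_inter_subset_insert_sdiff (Set.union_comm A B ▸ hcover)
      fun a ha hba ↦ hAB a ha b hb (G.adj_symm hba)
  obtain ⟨a, ha⟩ : A.Nonempty := Set.nonempty_of_ncard_ne_zero (by omega)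
  have hlam_le : lam ≤ mu := by
    rw [← hlam a w (G.adj_symm ha.2)]
    calc _ ≤ (insert x (A \ {a})).ncard := Set.ncard_le_ncard (hsubA a ha)
      _ ≤ (A \ {a}).ncard + 1 := Set.ncard_insert_le _ _
      _ = mu := by rw [Set.ncard_sdiff_singleton_of_mem ha, hpw]; omega
  refine lt_of_le_of_ne hlam_le fun hlam_eq ↦ ?_
  have hxAB : A ∪ B ⊆ G.neighborSet x ∩ G.neighborSet w := by
    rintro z (hz | hz)
    · refine ⟨G.adj_symm (adj_of_ncard_le_ncard_neighborSet_inter hz (hsubA z hz) ?_), hz.2⟩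
      rw [hlam z w (G.adj_symm hz.2), hpw, hlam_eq]
    · refine ⟨G.adj_symm (adj_of_ncard_le_ncard_neighborSet_inter hz (hsubB z hz) ?_), hz.2⟩
      rw [hlam z w (G.adj_symm hz.2), hqw, hlam_eq]
  have := Set.ncard_le_ncard hxAB
  rw [Set.ncard_union_eq hdisj, hpw, hqw, hlam x w (G.adj_symm hxw)] at this
  omega

end CommonNeighbors

section DoubleCounting

variable {k lam mu : ℕ}

lemma ncard_neighborSet_inter_dist_eq_two [Finite V] {u y : V}
    (hreg : ∀ v, (G.neighborSet v).ncard = k)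
    (hlam : ∀ u v, G.Adj u v → (G.neighborSet u ∩ G.neighborSet v).ncard = lam)
    (huy : G.Adj u y) :
    (G.neighborSet y ∩ {z | G.dist u z = 2}).ncard = k - (lam + 1) := by
  have hsplit : G.neighborSet y ∩ {z | G.dist u z = 2} =
      G.neighborSet y \ insert u (G.neighborSet y ∩ G.neighborSet u) := by
    ext z
    by_cases hyz : G.Adj y z
    · simp [hyz, dist_eq_two_iff_of_adj_of_adj huy hyz, eq_comm (a := z)]
    · simp [hyz]
  have hsub : insert u (G.neighborSet y ∩ G.neighborSet u) ⊆ G.neighborSet y :=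
    Set.insert_subset (G.adj_symm huy) Set.inter_subset_left
  rw [hsplit, Set.ncard_sdiff hsub, Set.ncard_insert_of_notMem fun h ↦ G.irrefl h.2, hreg,
    hlam y u (G.adj_symm huy)]

theorem ncard_dist_eq_two_mul [Fintype V] (hreg : ∀ v, (G.neighborSet v).ncard = k)
    (hlam : ∀ u v, G.Adj u v → (G.neighborSet u ∩ G.neighborSet v).ncard = lam)
    (hmu : ∀ u v, G.dist u v = 2 → (G.neighborSet u ∩ G.neighborSet v).ncard = mu) (u : V) :
    {z | G.dist u z = 2}.ncard * mu = k * (k - (lam + 1)) := by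
  classical
  have hcount := Finset.card_mul_eq_card_mul (r := G.Adj) (s := G.neighborFinset u)
    (t := {z | G.dist u z = 2}.toFinset) (m := k - (lam + 1)) (n := mu)
    (fun y hy ↦ by
      rw [← Set.ncard_coe_finset,
        ← ncard_neighborSet_inter_dist_eq_two hreg hlam ((G.mem_neighborFinset u y).mp hy)]
      congr 1
      ext z
      simp [and_comm])
    (fun z hz ↦ by
      rw [← Set.ncard_coe_finset, ← hmu u z (by simpa using hz)]
      congr 1
      ext y
      simp [G.adj_comm y z])
  rwa [← Set.ncard_coe_finset, coe_neighborFinset, hreg, ← Set.ncard_coe_finset,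
    Set.coe_toFinset, eq_comm] at hcount

end DoubleCounting

end SimpleGraph

open SimpleGraph

/-- A connected amply regular graph with diameter `≥ 4` and parameters
`(v, k, λ, μ)` with `k ≥ 5` odd and `μ = (k-1)/2` satisfies `λ = 0`. -/
theorem stmt3 {V : Type*} [Fintype V] (G : SimpleGraph V) (k lam mu : ℕ)
    (hconn : G.Connected) (hk : 5 ≤ k) (hkodd : Odd k) (hmu : mu = (k - 1) / 2)
    (hreg : ∀ v, (G.neighborSet v).ncard = k)
    (hlam : ∀ u v, G.Adj u v → (G.neighborSet u ∩ G.neighborSet v).ncard = lam)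
    (hmu2 : ∀ u v, G.dist u v = 2 → (G.neighborSet u ∩ G.neighborSet v).ncard = mu)
    (hdiam : ∃ u v, 4 ≤ G.dist u v) :
    lam = 0 := by
  have hk2 : k = 2 * mu + 1 := by
    obtain ⟨j, rfl⟩ := hkodd
    omega
  obtain ⟨p, v, hpv⟩ := hdiam
  obtain ⟨q, hpq, -⟩ := (hconn p v).exists_dist_eq_dist_eq hpv
  obtain ⟨w, hpw, hwq⟩ := (hconn p q).exists_dist_eq_dist_eq (m := 2) (by omega)
  have hlt : lam < mu := lam_lt_mu_of_three_lt_dist (by omega) (hk2 ▸ hreg w) hlam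
    (hmu2 p w hpw) (hmu2 q w (by rw [dist_comm]; omega)) (by omega)
  have hcount := ncard_dist_eq_two_mul hreg hlam hmu2 p
  set n := {z | G.dist p z = 2}.ncard
  have hdvd : (mu : ℤ) ∣ lam := by
    refine ⟨4 * mu + 2 - 2 * lam - n, ?_⟩
    rw [hk2, show 2 * mu + 1 - (lam + 1) = 2 * mu - lam by omega] at hcount
    zify [hlt.le.trans (Nat.le_mul_of_pos_left mu two_pos)] at hcount
    linear_combination hcount
  exact Nat.eq_zero_of_dvd_of_lt (Int.natCast_dvd_natCast.mp hdvd) hlt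
end

section
/- Let Γ be a connected amply regular graph with diameter d ≥ 4 and parameters (v, k, 0, μ) where k ≥ 5 is odd and μ = (k-1)/2. Then d ≤ 5. -/
/-!
Suppose `d(u, v) ≥ 6` and let `m` be the midpoint of a geodesic from `u` to a vertex at distance
exactly `6`. The key fact is that in a triangle-free graph in which vertices at distance `2` have
exactly `μ ≥ 2` common neighbours, a vertex `z` at distance `3` from `u` has at least `μ + 1`
neighbours at distance `2` from `u`. Applied on both sides of `m`, this gives `2μ + 2` distinct
neighbours of `m`, more than `k = 2μ + 1`.
-/

open Set SimpleGraph

namespace SimpleGraph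

variable {V : Type*} {G : SimpleGraph V}

lemma Adj.dist_le_dist_add_one {v w : V} (h : G.Adj v w) (u : V) :
    G.dist u w ≤ G.dist u v + 1 := by
  simpa [dist_eq_one_iff_adj.mpr h] using h.reachable.dist_triangle_right u

lemma dist_le_two_of_adj_of_adj_s4 {u x s : V} (hx : G.Adj u x) (hs : G.Adj x s) :
    G.dist u s ≤ 2 := by
  simpa [dist_eq_one_iff_adj.mpr hx] using hs.dist_le_dist_add_one u

lemma exists_dist_eq_and_dist_eq {u v : V} {m n : ℕ} (h : G.dist u v = m + n) :
    ∃ w, G.dist u w = m ∧ G.dist w v = n := by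
  by_cases h0 : G.dist u v = 0
  · exact ⟨u, by rw [dist_self]; omega, by omega⟩
  obtain ⟨p, hp⟩ := exists_walk_of_dist_ne_zero h0
  refine ⟨p.getVert m, ?_, ?_⟩
  · rw [← length_eq_dist_of_subwalk hp (p.isSubwalk_take m), Walk.take_length]
    omega
  · rw [← length_eq_dist_of_subwalk hp (p.isSubwalk_drop m), Walk.drop_length]
    omega

lemma CliqueFree.not_adj_of_adj_of_adj (htri : G.CliqueFree 3) {a b c : V}
    (hab : G.Adj a b) (hbc : G.Adj b c) (hac : a ≠ c) : ¬G.Adj a c :=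
  isIndepSet_neighborSet_of_triangleFree _ htri b hab.symm hbc hac

lemma CliqueFree.dist_eq_two_of_adj_of_adj (htri : G.CliqueFree 3) {a b c : V}
    (hab : G.Adj a b) (hbc : G.Adj b c) (hac : a ≠ c) : G.dist a c = 2 := by
  have := dist_le_two_of_adj_of_adj_s4 hab hbc
  have := (hab.reachable.trans hbc.reachable).one_lt_dist_of_ne_of_not_adj hac
    (htri.not_adj_of_adj_of_adj hab hbc hac)
  omega

lemma cliqueFree_three_of_ncard_inter_neighborSet_eq_zero
    (hfin : ∀ v, (G.neighborSet v).Finite)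
    (hlam : ∀ u v, G.Adj u v → (G.neighborSet u ∩ G.neighborSet v).ncard = 0) :
    G.CliqueFree 3 := by
  classical
  rintro s hs
  obtain ⟨a, b, c, hab, hac, hbc, -⟩ := is3Clique_iff.mp hs
  have hempty := (ncard_eq_zero ((hfin a).subset inter_subset_left)).mp (hlam a b hab)
  exact hempty.subset ⟨hac, hbc⟩

lemma neighborSet_inter_subset_of_adj_of_dist_eq_three {u x z : V} (hux : G.Adj u x)
    (hz : G.dist u z = 3) :
    G.neighborSet x ∩ G.neighborSet z ⊆ G.neighborSet z ∩ {w | G.dist u w = 2} := by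
  rintro s ⟨hxs, hzs⟩
  have := dist_le_two_of_adj_of_adj_s4 hux hxs
  have := hzs.symm.dist_le_dist_add_one u
  exact ⟨hzs, show G.dist u s = 2 by omega⟩

lemma CliqueFree.add_one_le_ncard_neighborSet_inter_dist_eq_two (htri : G.CliqueFree 3)
    {μ : ℕ} (hμ : 2 ≤ μ)
    (hmu : ∀ u v, G.dist u v = 2 → (G.neighborSet u ∩ G.neighborSet v).ncard = μ)
    {u z : V} (hfin : (G.neighborSet z).Finite) (hz : G.dist u z = 3) :
    μ + 1 ≤ (G.neighborSet z ∩ {w | G.dist u w = 2}).ncard := by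
  set S := G.neighborSet z ∩ {w | G.dist u w = 2}
  have hSfin : S.Finite := hfin.subset inter_subset_left
  have hne_z : ∀ {x}, G.Adj u x → x ≠ z := by
    rintro x hux rfl
    rw [dist_eq_one_iff_adj.mpr hux] at hz
    omega
  obtain ⟨w₀, hw₀, hw₀z⟩ := exists_dist_eq_and_dist_eq (m := 2) (n := 1) hz
  rw [dist_eq_one_iff_adj] at hw₀z
  set M := G.neighborSet u ∩ G.neighborSet w₀
  have hM : M.ncard = μ := hmu u w₀ hw₀
  have hxz : ∀ x ∈ M, (G.neighborSet x ∩ G.neighborSet z).ncard = μ :=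
    fun x ⟨hux, hw₀x⟩ ↦
      hmu x z (htri.dist_eq_two_of_adj_of_adj hw₀x.symm hw₀z (hne_z hux))
  by_contra! hS
  -- Each `x ∈ M` has `μ ≥ |S|` common neighbours with `z`, all in `S`, so they exhaust `S`.
  have hSeq : ∀ x ∈ M, S = G.neighborSet x ∩ G.neighborSet z := fun x hxM ↦
    (eq_of_subset_of_ncard_le (neighborSet_inter_subset_of_adj_of_dist_eq_three hxM.1 hz)
      (by rw [hxz x hxM]; exact Nat.lt_succ_iff.mp hS) hSfin).symm
  obtain ⟨x₀, hx₀⟩ := nonempty_of_ncard_ne_zero (s := M) (by omega)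
  obtain ⟨w₁, hw₁, w₂, hw₂, hne⟩ :=
    (one_lt_ncard hSfin).mp (by rw [hSeq x₀ hx₀, hxz x₀ hx₀]; omega)
  -- Then `z` and all of `M` are common neighbours of `w₁` and `w₂`, which are at distance `2`.
  have hsub : insert z M ⊆ G.neighborSet w₁ ∩ G.neighborSet w₂ := by
    rintro a (rfl | haM)
    · exact ⟨hw₁.1.symm, hw₂.1.symm⟩
    · rw [hSeq a haM] at hw₁ hw₂
      exact ⟨hw₁.1.symm, hw₂.1.symm⟩
  have hw₁₂ := hmu w₁ w₂ (htri.dist_eq_two_of_adj_of_adj hw₁.1.symm hw₂.1 hne)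
  have := ncard_le_ncard hsub (finite_of_ncard_ne_zero (by omega))
  rw [ncard_insert_of_notMem (fun h ↦ hne_z h.1 rfl) (finite_of_ncard_ne_zero (by omega)),
    hM, hw₁₂] at this
  omega

lemma CliqueFree.two_mul_add_two_le_ncard_neighborSet
    (htri : G.CliqueFree 3) {μ : ℕ} (hμ : 2 ≤ μ)
    (hmu : ∀ u v, G.dist u v = 2 → (G.neighborSet u ∩ G.neighborSet v).ncard = μ)
    {u m v : V} (hfin : (G.neighborSet m).Finite) (huv : 4 < G.dist u v)
    (hum : G.dist u m = 3) (hmv : G.dist m v = 3) :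
    2 * (μ + 1) ≤ (G.neighborSet m).ncard := by
  have hA := htri.add_one_le_ncard_neighborSet_inter_dist_eq_two hμ hmu hfin hum
  have hB := htri.add_one_le_ncard_neighborSet_inter_dist_eq_two hμ hmu hfin
    (dist_comm.trans hmv)
  set A := G.neighborSet m ∩ {w | G.dist u w = 2}
  set B := G.neighborSet m ∩ {w | G.dist v w = 2}
  have hdisj : Disjoint A B := by
    refine Set.disjoint_left.mpr fun a haA haB ↦ ?_
    have hua : G.dist u a = 2 := haA.2
    have hva : G.dist v a = 2 := haB.2
    have := (Reachable.of_dist_ne_zero (by omega : G.dist u a ≠ 0)).dist_triangle_left v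
    rw [dist_comm (u := a)] at this
    omega
  calc 2 * (μ + 1) ≤ (A ∪ B).ncard := by
        rw [ncard_union_eq hdisj (hfin.subset inter_subset_left) (hfin.subset inter_subset_left)]
        omega
    _ ≤ (G.neighborSet m).ncard :=
        ncard_le_ncard (union_subset inter_subset_left inter_subset_left) hfin

end SimpleGraph

theorem stmt4_general {V : Type*} (G : SimpleGraph V) (k mu : ℕ)
    (hk : 5 ≤ k) (hkodd : Odd k) (hmu : mu = (k - 1) / 2)
    (hreg : ∀ v, (G.neighborSet v).ncard = k)
    (hlam : ∀ u v, G.Adj u v → (G.neighborSet u ∩ G.neighborSet v).ncard = 0)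
    (hmu2 : ∀ u v, G.dist u v = 2 → (G.neighborSet u ∩ G.neighborSet v).ncard = mu) :
    ∀ u v, G.dist u v ≤ 5 := by
  have hfin : ∀ v, (G.neighborSet v).Finite := fun v ↦
    finite_of_ncard_ne_zero (by rw [hreg v]; omega)
  have htri := cliqueFree_three_of_ncard_inter_neighborSet_eq_zero hfin hlam
  obtain ⟨j, rfl⟩ := hkodd
  have hμ : 2 ≤ mu := by omega
  intro u v
  by_contra! huv
  obtain ⟨v', huv', -⟩ := exists_dist_eq_and_dist_eq
    (show G.dist u v = 6 + (G.dist u v - 6) by omega)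
  obtain ⟨m, hum, hmv'⟩ := exists_dist_eq_and_dist_eq (m := 3) (n := 3) huv'
  have := htri.two_mul_add_two_le_ncard_neighborSet hμ hmu2 (hfin m) (by omega) hum hmv'
  rw [hreg m] at this
  omega

/-- A connected amply regular graph with diameter `≥ 4` and parameters
`(v, k, 0, μ)` with `k ≥ 5` odd and `μ = (k-1)/2` has diameter at most `5`. -/
theorem stmt4 {V : Type*} [Fintype V] (G : SimpleGraph V) (k mu : ℕ)
    (hconn : G.Connected) (hk : 5 ≤ k) (hkodd : Odd k) (hmu : mu = (k - 1) / 2)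
    (hreg : ∀ v, (G.neighborSet v).ncard = k)
    (hlam : ∀ u v, G.Adj u v → (G.neighborSet u ∩ G.neighborSet v).ncard = 0)
    (hmu2 : ∀ u v, G.dist u v = 2 → (G.neighborSet u ∩ G.neighborSet v).ncard = mu)
    (hdiam : ∃ u v, 4 ≤ G.dist u v) :
    ∀ u v, G.dist u v ≤ 5 :=
  stmt4_general G k mu hk hkodd hmu hreg hlam hmu2
end

section
/- Let Γ be a connected (G,2)-distance-transitive graph of valency k ≥ 2 with intersection numbers b₁ and c₂. If gcd(b₁, k) = 1 and c₂ divides k, then Γ is (G,2)-geodesic-transitive. -/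
/-!
Fix `u`. Counting the 2-geodesics `(u, a, x)` by their middle vertex and by their end gives
`k * b₁ = |Γ₂(u)| * c₂`. The `G_u`-orbit of one 2-geodesic is also counted regularly, `m` per
middle vertex and `m₂` per end, because `G_u` is transitive on `Γ(u)` and on `Γ₂(u)`; so
`k * m = |Γ₂(u)| * m₂`. With `c₂ ∣ k` these give `c₂ * m = b₁ * m₂`, so `b₁ ∣ m` as `b₁` is
coprime to `c₂`; since `0 < m ≤ b₁`, the orbit contains every 2-geodesic from `u`.
-/

open Finset

theorem Finset.card_filter_eq_of_equiv {β γ : Type*} {p : β → Prop} {q : γ → Prop}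
    [DecidablePred p] [DecidablePred q] {s : Finset β} {t : Finset γ} (f : β ≃ γ)
    (hst : ∀ x, f x ∈ t ↔ x ∈ s) (hpq : ∀ x, q (f x) ↔ p x) :
    #(s.filter p) = #(t.filter q) :=
  card_nbij' f f.symm (fun x hx => by simp_all) (fun y hy => by simp_all [← hst, ← hpq])
    (fun x _ => by simp) (fun y _ => by simp)

theorem Nat.dvd_of_coprime_of_mul_eq_mul {k b c d m n : ℕ} (hk : 0 < k) (hcop : Nat.Coprime b k)
    (hdvd : c ∣ k) (hb : k * b = d * c) (hm : k * m = d * n) : b ∣ m := by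
  obtain ⟨t, rfl⟩ := hdvd
  have hc : 0 < c := Nat.pos_of_mul_pos_right hk
  have ht : 0 < t := Nat.pos_of_mul_pos_left hk
  have hd : d = t * b := Nat.eq_of_mul_eq_mul_right hc (by rw [← hb]; ring)
  have hcm : c * m = b * n :=
    Nat.eq_of_mul_eq_mul_left ht (by rw [hd] at hm; linarith [hm])
  exact (hcop.coprime_dvd_right (dvd_mul_right c t)).dvd_of_dvd_mul_left ⟨n, hcm⟩

theorem Finset.bipartiteAbove_eq_of_coprime {α β : Type*} {r s : α → β → Prop}
    [∀ a b, Decidable (r a b)] [∀ a b, Decidable (s a b)] {A : Finset α} {B : Finset β}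
    {b c m n : ℕ} (hrs : ∀ a ∈ A, ∀ x ∈ B, r a x → s a x)
    (hsA : ∀ a ∈ A, #(B.bipartiteAbove s a) = b) (hsB : ∀ x ∈ B, #(A.bipartiteBelow s x) = c)
    (hrA : ∀ a ∈ A, #(B.bipartiteAbove r a) = m) (hrB : ∀ x ∈ B, #(A.bipartiteBelow r x) = n)
    (hm : 0 < m) (hcop : Nat.Coprime b #A) (hdvd : c ∣ #A) {a : α} (ha : a ∈ A) :
    B.bipartiteAbove r a = B.bipartiteAbove s a := by
  have hsub : B.bipartiteAbove r a ⊆ B.bipartiteAbove s a := fun x hx => by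
    simp only [mem_bipartiteAbove] at hx ⊢
    exact ⟨hx.1, hrs a ha x hx.1 hx.2⟩
  have hbm : b ∣ m :=
    Nat.dvd_of_coprime_of_mul_eq_mul (card_pos.2 ⟨a, ha⟩) hcop hdvd
      (card_mul_eq_card_mul s hsA hsB) (card_mul_eq_card_mul r hrA hrB)
  refine eq_of_subset_of_card_le hsub ?_
  rw [hsA a ha, hrA a ha]
  exact Nat.le_of_dvd hm hbm

namespace SimpleGraph

variable {V W : Type*} {Γ : SimpleGraph V} {Δ : SimpleGraph W}

theorem Hom.edist_le (f : Γ →g Δ) (u v : V) : Δ.edist (f u) (f v) ≤ Γ.edist u v :=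
  le_iInf fun p => (Δ.edist_le (p.map f)).trans (by simp)

theorem Iso.edist_eq (e : Γ ≃g Δ) (u v : V) : Δ.edist (e u) (e v) = Γ.edist u v :=
  le_antisymm (e.toHom.edist_le u v) (by simpa using e.symm.toHom.edist_le (e u) (e v))

theorem Iso.dist_eq (e : Γ ≃g Δ) (u v : V) : Δ.dist (e u) (e v) = Γ.dist u v := by
  simp only [dist, e.edist_eq]

section StabilizerOrbit

variable {G : Type*} [Group G] {φ : G →* Equiv.Perm V}

def StabilizerOrbit (φ : G →* Equiv.Perm V) (u v w a x : V) : Prop :=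
  ∃ g : G, φ g u = u ∧ φ g v = a ∧ φ g w = x

theorem stabilizerOrbit_apply_iff {u v w a x : V} {h : G} (hu : φ h u = u) :
    StabilizerOrbit φ u v w (φ h a) (φ h x) ↔ StabilizerOrbit φ u v w a x := by
  have hu' : (φ h).symm u = u := (φ h).symm_apply_eq.2 hu.symm
  constructor
  · rintro ⟨g, hgu, hgv, hgw⟩
    exact ⟨h⁻¹ * g, by simp [hgu, hu'], by simp [hgv], by simp [hgw]⟩
  · rintro ⟨g, hgu, hgv, hgw⟩
    exact ⟨h * g, by simp [hgu, hu], by simp [hgv], by simp [hgw]⟩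

theorem dist_apply_eq (haut : ∀ (g : G) (u v : V), Γ.Adj (φ g u) (φ g v) ↔ Γ.Adj u v) (g : G)
    (u v : V) : Γ.dist (φ g u) (φ g v) = Γ.dist u v :=
  Iso.dist_eq (Γ := Γ) ⟨φ g, haut g _ _⟩ u v

theorem exists_fixing_map_twoGeodesic_of_coprime [Fintype V]
    (haut : ∀ (g : G) (u v : V), Γ.Adj (φ g u) (φ g v) ↔ Γ.Adj u v) {u : V} {k b₁ c₂ : ℕ}
    (hk : (Γ.neighborSet u).ncard = k)
    (hb₁ : ∀ v, Γ.Adj u v → {w | Γ.Adj v w ∧ Γ.dist u w = 2}.ncard = b₁)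
    (hc₂ : ∀ w, Γ.dist u w = 2 → (Γ.neighborSet u ∩ Γ.neighborSet w).ncard = c₂)
    (hs1 : ∀ v w, Γ.Adj u v → Γ.Adj u w → ∃ g : G, φ g u = u ∧ φ g v = w)
    (hs2 : ∀ v w, Γ.dist u v = 2 → Γ.dist u w = 2 → ∃ g : G, φ g u = u ∧ φ g v = w)
    (hcop : Nat.Coprime b₁ k) (hdvd : c₂ ∣ k) {v w v' w' : V}
    (huv : Γ.Adj u v) (hvw : Γ.Adj v w) (huw : Γ.dist u w = 2)
    (huv' : Γ.Adj u v') (hvw' : Γ.Adj v' w') (huw' : Γ.dist u w' = 2) :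
    ∃ g : G, φ g u = u ∧ φ g v = v' ∧ φ g w = w' := by
  classical
  set N : Finset V := univ.filter (Γ.Adj u)
  set D : Finset V := univ.filter (fun x => Γ.dist u x = 2)
  set R := StabilizerOrbit φ u v w
  have hN : #N = k := by
    rw [← hk, ← Set.ncard_coe_finset]; congr 1; ext; simp [N]
  have hN_map : ∀ h : G, φ h u = u → ∀ x, φ h x ∈ N ↔ x ∈ N := fun h hu x => by
    simpa [N, hu] using haut h u x
  have hD_map : ∀ h : G, φ h u = u → ∀ x, φ h x ∈ D ↔ x ∈ D := fun h hu x => by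
    simpa [D, hu] using congrArg (· = 2) (dist_apply_eq haut h u x)
  have hR_above : ∀ a ∈ N, #(D.bipartiteAbove R a) = #(D.bipartiteAbove R v) := by
    intro a ha
    obtain ⟨h, hu, rfl⟩ := hs1 v a huv (by simpa [N] using ha)
    exact (card_filter_eq_of_equiv (φ h) (hD_map h hu)
      (fun x => stabilizerOrbit_apply_iff hu)).symm
  have hR_below : ∀ x ∈ D, #(N.bipartiteBelow R x) = #(N.bipartiteBelow R w) := by
    intro x hx
    obtain ⟨h, hu, rfl⟩ := hs2 w x huw (by simpa [D] using hx)
    exact (card_filter_eq_of_equiv (p := (R · w)) (q := (R · (φ h w))) (φ h) (hN_map h hu)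
      (fun a => stabilizerOrbit_apply_iff hu)).symm
  have hR_adj : ∀ a ∈ N, ∀ x ∈ D, R a x → Γ.Adj a x := by
    rintro a - x - ⟨g, -, rfl, rfl⟩
    exact (haut g v w).2 hvw
  have h_above : ∀ a ∈ N, #(D.bipartiteAbove Γ.Adj a) = b₁ := fun a ha => by
    rw [← hb₁ a (by simpa [N] using ha), ← Set.ncard_coe_finset]; congr 1; ext; simp [D, and_comm]
  have h_below : ∀ x ∈ D, #(N.bipartiteBelow Γ.Adj x) = c₂ := fun x hx => by
    rw [← hc₂ x (by simpa [D] using hx), ← Set.ncard_coe_finset]; congr 1; ext; simp [N, adj_comm]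
  have hm : 0 < #(D.bipartiteAbove R v) :=
    card_pos.2 ⟨w, (mem_bipartiteAbove _).2 ⟨by simpa [D], 1, by simp⟩⟩
  have hfiber := bipartiteAbove_eq_of_coprime hR_adj h_above h_below hR_above hR_below hm
    (hN ▸ hcop) (hN ▸ hdvd) (a := v') (by simpa [N])
  have hw' : w' ∈ D.bipartiteAbove R v' := hfiber ▸ (mem_bipartiteAbove _).2 ⟨by simpa [D], hvw'⟩
  exact ((mem_bipartiteAbove _).1 hw').2

end StabilizerOrbit

end SimpleGraph

theorem stmt8_general {V : Type*} [Fintype V] (Γ : SimpleGraph V) (G : Type*) [Group G]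
    (φ : G →* Equiv.Perm V)
    (haut : ∀ (g : G) (u v : V), Γ.Adj (φ g u) (φ g v) ↔ Γ.Adj u v)
    (k b₁ c₂ : ℕ)
    (hreg : ∀ v, (Γ.neighborSet v).ncard = k)
    (hb₁ : ∀ u v, Γ.Adj u v → {w | Γ.Adj v w ∧ Γ.dist u w = 2}.ncard = b₁)
    (hc₂ : ∀ u w, Γ.dist u w = 2 → (Γ.neighborSet u ∩ Γ.neighborSet w).ncard = c₂)
    (hvt : ∀ u v : V, ∃ g : G, φ g u = v)
    (hs1 : ∀ u v w : V, Γ.Adj u v → Γ.Adj u w → ∃ g : G, φ g u = u ∧ φ g v = w)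
    (hs2 : ∀ u v w : V, Γ.dist u v = 2 → Γ.dist u w = 2 → ∃ g : G, φ g u = u ∧ φ g v = w)
    (hcop : Nat.gcd b₁ k = 1) (hdvd : c₂ ∣ k) :
    (∀ u v u' v' : V, Γ.Adj u v → Γ.Adj u' v' → ∃ g : G, φ g u = u' ∧ φ g v = v') ∧
    (∀ u v w u' v' w' : V, Γ.Adj u v → Γ.Adj v w → Γ.dist u w = 2 →
      Γ.Adj u' v' → Γ.Adj v' w' → Γ.dist u' w' = 2 →
      ∃ g : G, φ g u = u' ∧ φ g v = v' ∧ φ g w = w') := by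
  refine ⟨fun u v u' v' huv huv' => ?_, fun u v w u' v' w' huv hvw huw huv' hvw' huw' => ?_⟩
  · obtain ⟨g, rfl⟩ := hvt u u'
    obtain ⟨h, hu, hv⟩ := hs1 _ _ v' ((haut g u v).2 huv) huv'
    exact ⟨h * g, by simp [hu], by simp [hv]⟩
  · obtain ⟨g, rfl⟩ := hvt u u'
    have huw_g := (SimpleGraph.dist_apply_eq haut g u w).trans huw
    obtain ⟨h, hu, hv, hw⟩ := SimpleGraph.exists_fixing_map_twoGeodesic_of_coprime haut
      (hreg _) (hb₁ _) (hc₂ _) (hs1 _) (hs2 _) hcop hdvd ((haut g u v).2 huv)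
      ((haut g v w).2 hvw) huw_g huv' hvw' huw'
    exact ⟨h * g, by simp [hu], by simp [hv], by simp [hw]⟩

/-- Let `Γ` be a connected `(G,2)`-distance-transitive graph of valency
`k ≥ 2` with intersection numbers `b₁`, `c₂`. If `gcd(b₁, k) = 1` and `c₂ ∣ k`, then `Γ` is
`(G,2)`-geodesic-transitive, i.e. `G` is transitive on arcs and on 2-geodesics. -/
theorem stmt8 {V : Type*} [Fintype V] (Γ : SimpleGraph V) (G : Type*) [Group G]
    (φ : G →* Equiv.Perm V)
    (haut : ∀ (g : G) (u v : V), Γ.Adj (φ g u) (φ g v) ↔ Γ.Adj u v)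
    (k b₁ c₂ : ℕ) (hk : 2 ≤ k) (hconn : Γ.Connected)
    (hreg : ∀ v, (Γ.neighborSet v).ncard = k)
    (hb₁ : ∀ u v, Γ.Adj u v → {w | Γ.Adj v w ∧ Γ.dist u w = 2}.ncard = b₁)
    (hc₂ : ∀ u w, Γ.dist u w = 2 → (Γ.neighborSet u ∩ Γ.neighborSet w).ncard = c₂)
    (hvt : ∀ u v : V, ∃ g : G, φ g u = v)
    (hs1 : ∀ u v w : V, Γ.Adj u v → Γ.Adj u w → ∃ g : G, φ g u = u ∧ φ g v = w)
    (hs2 : ∀ u v w : V, Γ.dist u v = 2 → Γ.dist u w = 2 → ∃ g : G, φ g u = u ∧ φ g v = w)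
    (hcop : Nat.gcd b₁ k = 1) (hdvd : c₂ ∣ k) :
    (∀ u v u' v' : V, Γ.Adj u v → Γ.Adj u' v' → ∃ g : G, φ g u = u' ∧ φ g v = v') ∧
    (∀ u v w u' v' w' : V, Γ.Adj u v → Γ.Adj v w → Γ.dist u w = 2 →
      Γ.Adj u' v' → Γ.Adj v' w' → Γ.dist u' w' = 2 →
      ∃ g : G, φ g u = u' ∧ φ g v = v' ∧ φ g w = w') :=
  stmt8_general Γ G φ haut k b₁ c₂ hreg hb₁ hc₂ hvt hs1 hs2 hcop hdvd
end

section
/- Let Γ be a connected 2-distance-transitive graph of valency k ≥ 3 with intersection number b₁ = 1. Then k is even and Γ is isomorphic to the complete multipartite graph K_{(k+2)/2 [2]} (with (k+2)/2 parts of size 2). -/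
/-!
Let `w` be the unique neighbour of `v` at distance `2` from `u`, for an edge `uv`. Every other
neighbour of `v` is adjacent to `u`; applied to the edge `vw`, this shows that `v` and `w` have at
least `k - 2` common neighbours, hence that they are exactly the `k - 2` vertices of
`N(v) \ {u, w}`. So `w` is adjacent to at least `k - 1` neighbours of `u`, and two distinct
vertices at distance `2` from `u` would have disjoint sets of such neighbours inside `N(u)`, which
is impossible for `k ≥ 3`. Thus each `u` has a unique vertex `ū` at distance `2`, and every
neighbour of `u` is adjacent to it, so `N(ū) = N(u)`. By connectivity `V = {u, ū} ∪ N(u)`, and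
non-adjacency is an equivalence relation whose classes are the pairs `{u, ū}`.
-/

/-- `Γ` is 2-distance-transitive. -/
def TwoDistanceTransitive {V : Type*} (Γ : SimpleGraph V) : Prop :=
  (∀ u v : V, ∃ g : Γ ≃g Γ, g u = v) ∧
  (∀ u v w : V, Γ.Adj u v → Γ.Adj u w → ∃ g : Γ ≃g Γ, g u = u ∧ g v = w) ∧
  (∀ u v w : V, Γ.dist u v = 2 → Γ.dist u w = 2 → ∃ g : Γ ≃g Γ, g u = u ∧ g v = w)

open Set

namespace SimpleGraph

variable {V : Type*} {Γ : SimpleGraph V} {k : ℕ} {u v w x y : V}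

lemma dist_eq_two_iff :
    Γ.dist u v = 2 ↔ u ≠ v ∧ ¬Γ.Adj u v ∧ (Γ.commonNeighbors u v).Nonempty := by
  rw [← edist_eq_two_iff]
  refine ⟨fun h => ?_, fun h => ?_⟩
  · rw [← (Reachable.of_dist_ne_zero (h ▸ two_ne_zero)).coe_dist_eq_edist, h]
    rfl
  · have hr : Γ.Reachable u v := reachable_of_edist_ne_top (by simp [h])
    exact_mod_cast hr.coe_dist_eq_edist.trans h

lemma ncard_neighborSet_sdiff_pair_add_two [Finite V] (hreg : ∀ v, (Γ.neighborSet v).ncard = k)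
    (hvu : Γ.Adj v u) (hvw : Γ.Adj v w) (huw : u ≠ w) :
    (Γ.neighborSet v \ {u, w}).ncard + 2 = k := by
  have hsub : {u, w} ⊆ Γ.neighborSet v := pair_subset hvu hvw
  rw [← ncard_pair huw, ncard_sdiff_add_ncard_of_subset hsub, hreg]

lemma isCompleteMultipartite_of_neighborSet_eq
    (h : ∀ u v, ¬Γ.Adj u v → Γ.neighborSet u = Γ.neighborSet v) : Γ.IsCompleteMultipartite := by
  refine ⟨fun u v w huv hvw huw => Γ.irrefl (v := w) ?_⟩
  change w ∈ Γ.neighborSet w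
  rwa [← h v w hvw, ← h u v huv]

def Iso.completeMultipartiteGraph {ι ι' : Type*} {P : ι → Type*} {Q : ι' → Type*} (e : ι ≃ ι')
    (f : ∀ i, P i ≃ Q (e i)) :
    completeMultipartiteGraph P ≃g completeMultipartiteGraph Q where
  toEquiv := Equiv.sigmaCongr e f
  map_rel_iff' := by simp [Equiv.sigmaCongr]

lemma IsCompleteMultipartite.exists_iso_completeMultipartiteGraph_fin [Finite V] {t : ℕ}
    (h : Γ.IsCompleteMultipartite) (ht : ∀ v, (Γ.neighborSet v)ᶜ.ncard = t) :
    ∃ m, Nat.card V = m * t ∧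
      Nonempty (Γ ≃g completeMultipartiteGraph (fun _ : Fin m => Fin t)) := by
  let e := h.iso.trans <| Iso.completeMultipartiteGraph (Q := fun _ => Fin t)
    (Finite.equivFin (Quotient h.setoid)) fun c => Finite.equivFinOfCardEq (ht c.out)
  refine ⟨_, ?_, ⟨e⟩⟩
  rw [Nat.card_congr e.toEquiv, Nat.card_sigma]
  simp

/-- The intersection-number condition `b₁ = 1`. -/
def UniqueFarNeighbor (Γ : SimpleGraph V) : Prop :=
  ∀ ⦃u v⦄, Γ.Adj u v → ∃! w, Γ.Adj v w ∧ Γ.dist u w = 2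

namespace UniqueFarNeighbor

lemma adj_of_adj_of_ne (hΓ : Γ.UniqueFarNeighbor) (huv : Γ.Adj u v) (hvw : Γ.Adj v w)
    (huw : Γ.dist u w = 2) (hvx : Γ.Adj v x) (hxu : x ≠ u) (hxw : x ≠ w) : Γ.Adj u x := by
  by_contra hux
  have hx : Γ.dist u x = 2 := dist_eq_two_iff.mpr ⟨hxu.symm, hux, v, huv, hvx.symm⟩
  exact hxw <| (hΓ huv).unique ⟨hvx, hx⟩ ⟨hvw, huw⟩

lemma le_ncard_commonNeighbors [Finite V] (hΓ : Γ.UniqueFarNeighbor)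
    (hreg : ∀ v, (Γ.neighborSet v).ncard = k) (hvw : Γ.Adj v w) :
    k - 2 ≤ (Γ.commonNeighbors v w).ncard := by
  obtain ⟨w', ⟨hww', hvw'⟩, -⟩ := hΓ hvw
  have hsub : Γ.neighborSet w \ {v, w'} ⊆ Γ.commonNeighbors v w := fun x ⟨hwx, hx⟩ =>
    ⟨hΓ.adj_of_adj_of_ne hvw hww' hvw' hwx (fun h => hx (.inl h)) (fun h => hx (.inr h)), hwx⟩
  calc k - 2 ≤ (Γ.neighborSet w).ncard - ({v, w'} : Set V).ncard := by
        rw [hreg, ncard_pair (dist_eq_two_iff.mp hvw').1]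
    _ ≤ (Γ.neighborSet w \ {v, w'}).ncard := le_ncard_sdiff _ _
    _ ≤ (Γ.commonNeighbors v w).ncard := ncard_le_ncard hsub

lemma commonNeighbors_eq_sdiff [Finite V] (hΓ : Γ.UniqueFarNeighbor)
    (hreg : ∀ v, (Γ.neighborSet v).ncard = k) (huv : Γ.Adj u v) (hvw : Γ.Adj v w)
    (huw : Γ.dist u w = 2) : Γ.commonNeighbors v w = Γ.neighborSet v \ {u, w} := by
  obtain ⟨hne, hnadj, -⟩ := dist_eq_two_iff.mp huw
  refine eq_of_subset_of_ncard_le (fun x ⟨hvx, hwx⟩ => ⟨hvx, ?_⟩) ?_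
  · rintro (rfl | rfl)
    · exact hnadj hwx.symm
    · exact Γ.irrefl hwx
  · have := ncard_neighborSet_sdiff_pair_add_two hreg huv.symm hvw hne
    have := hΓ.le_ncard_commonNeighbors hreg hvw
    omega

lemma le_ncard_commonNeighbors_of_dist_eq_two [Finite V] (hΓ : Γ.UniqueFarNeighbor)
    (hreg : ∀ v, (Γ.neighborSet v).ncard = k) (hux : Γ.dist u x = 2) :
    k - 1 ≤ (Γ.commonNeighbors u x).ncard := by
  obtain ⟨hne, -, v, huv, hxv⟩ := dist_eq_two_iff.mp hux
  have hsub : insert v (Γ.neighborSet v \ {u, x}) ⊆ Γ.commonNeighbors u x := by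
    rintro y (rfl | hy)
    · exact ⟨huv, hxv⟩
    · have hvxy : y ∈ Γ.commonNeighbors v x := by
        rwa [hΓ.commonNeighbors_eq_sdiff hreg huv hxv.symm hux]
      exact ⟨hΓ.adj_of_adj_of_ne huv hxv.symm hux hy.1 (fun h => hy.2 (.inl h))
        (fun h => hy.2 (.inr h)), hvxy.2⟩
  have hv : v ∉ Γ.neighborSet v \ {u, x} := fun h => Γ.irrefl h.1
  have := ncard_le_ncard hsub
  rw [ncard_insert_of_notMem hv] at this
  have := ncard_neighborSet_sdiff_pair_add_two hreg huv.symm hxv.symm hne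
  omega

lemma eq_of_dist_eq_two [Finite V] (hΓ : Γ.UniqueFarNeighbor)
    (hreg : ∀ v, (Γ.neighborSet v).ncard = k) (hk : 3 ≤ k) (hux : Γ.dist u x = 2)
    (huy : Γ.dist u y = 2) : x = y := by
  by_contra hxy
  have hdisj : Disjoint (Γ.commonNeighbors u x) (Γ.commonNeighbors u y) := by
    refine Set.disjoint_left.mpr fun v hvx hvy => hxy ?_
    exact (hΓ hvx.1).unique ⟨hvx.2.symm, hux⟩ ⟨hvy.2.symm, huy⟩
  have hsub : Γ.commonNeighbors u x ∪ Γ.commonNeighbors u y ⊆ Γ.neighborSet u :=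
    union_subset (fun _ h => h.1) (fun _ h => h.1)
  have := ncard_le_ncard hsub
  rw [ncard_union_eq hdisj, hreg] at this
  have := hΓ.le_ncard_commonNeighbors_of_dist_eq_two hreg hux
  have := hΓ.le_ncard_commonNeighbors_of_dist_eq_two hreg huy
  omega

lemma neighborSet_eq_of_dist_eq_two [Finite V] (hΓ : Γ.UniqueFarNeighbor)
    (hreg : ∀ v, (Γ.neighborSet v).ncard = k) (hk : 3 ≤ k) (hux : Γ.dist u x = 2) :
    Γ.neighborSet x = Γ.neighborSet u := by
  refine (eq_of_subset_of_ncard_le (fun v huv => ?_) (by rw [hreg, hreg])).symm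
  obtain ⟨w, ⟨hvw, huw⟩, -⟩ := hΓ huv
  exact (hΓ.eq_of_dist_eq_two hreg hk huw hux ▸ hvw).symm

lemma eq_or_adj_or_dist_eq_two [Finite V] (hΓ : Γ.UniqueFarNeighbor) (hconn : Γ.Connected)
    (hreg : ∀ v, (Γ.neighborSet v).ncard = k) (hk : 3 ≤ k) (u y : V) :
    y = u ∨ Γ.Adj u y ∨ Γ.dist u y = 2 := by
  induction (reachable_iff_reflTransGen u y).mp (hconn u y) with
  | refl => exact .inl rfl
  | @tail a b _ hab ih =>
    rcases ih with rfl | hua | hua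
    · exact .inr (.inl hab)
    · by_cases hbu : b = u
      · exact .inl hbu
      by_cases hub : Γ.Adj u b
      · exact .inr (.inl hub)
      exact .inr (.inr (dist_eq_two_iff.mpr ⟨Ne.symm hbu, hub, a, hua, hab.symm⟩))
    · have hb : b ∈ Γ.neighborSet a := hab
      rw [hΓ.neighborSet_eq_of_dist_eq_two hreg hk hua] at hb
      exact .inr (.inl hb)

lemma neighborSet_eq_of_not_adj [Finite V] (hΓ : Γ.UniqueFarNeighbor) (hconn : Γ.Connected)
    (hreg : ∀ v, (Γ.neighborSet v).ncard = k) (hk : 3 ≤ k) (huv : ¬Γ.Adj u v) :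
    Γ.neighborSet u = Γ.neighborSet v := by
  rcases hΓ.eq_or_adj_or_dist_eq_two hconn hreg hk u v with rfl | huv' | huv'
  · rfl
  · exact absurd huv' huv
  · exact (hΓ.neighborSet_eq_of_dist_eq_two hreg hk huv').symm

lemma ncard_compl_neighborSet [Finite V] (hΓ : Γ.UniqueFarNeighbor) (hconn : Γ.Connected)
    (hreg : ∀ v, (Γ.neighborSet v).ncard = k) (hk : 3 ≤ k) (u : V) :
    (Γ.neighborSet u)ᶜ.ncard = 2 := by
  obtain ⟨v, huv⟩ := nonempty_of_ncard_ne_zero (s := Γ.neighborSet u) (by rw [hreg u]; omega)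
  obtain ⟨x, ⟨-, hux⟩, -⟩ := hΓ huv
  obtain ⟨hne, hnadj, -⟩ := dist_eq_two_iff.mp hux
  suffices (Γ.neighborSet u)ᶜ = {u, x} by rw [this, ncard_pair hne]
  ext y
  refine ⟨fun huy => ?_, ?_⟩
  · rcases hΓ.eq_or_adj_or_dist_eq_two hconn hreg hk u y with rfl | huy' | huy'
    · exact .inl rfl
    · exact absurd huy' huy
    · exact .inr (hΓ.eq_of_dist_eq_two hreg hk huy' hux)
  · rintro (rfl | rfl)
    · exact Γ.irrefl
    · exact hnadj

end UniqueFarNeighbor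

end SimpleGraph

theorem stmt11_general {V : Type*} [Fintype V] (Γ : SimpleGraph V) (k : ℕ) (hk : 3 ≤ k)
    (hconn : Γ.Connected)
    (hreg : ∀ v, (Γ.neighborSet v).ncard = k)
    (hb₁ : ∀ u v, Γ.Adj u v → {w | Γ.Adj v w ∧ Γ.dist u w = 2}.ncard = 1) :
    Even k ∧
    Nonempty (Γ ≃g SimpleGraph.completeMultipartiteGraph (fun _ : Fin ((k + 2) / 2) => Fin 2)) := by
  have hΓ : Γ.UniqueFarNeighbor := fun u v huv =>
    singleton_iff_unique_mem.mp (ncard_eq_one.mp (hb₁ u v huv))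
  obtain ⟨u⟩ := hconn.nonempty
  have hcard : k + 2 = Nat.card V := by
    rw [← hreg u, ← hΓ.ncard_compl_neighborSet hconn hreg hk u, ncard_add_ncard_compl]
  obtain ⟨m, hm, hiso⟩ := (SimpleGraph.isCompleteMultipartite_of_neighborSet_eq fun _ _ =>
    hΓ.neighborSet_eq_of_not_adj hconn hreg hk).exists_iso_completeMultipartiteGraph_fin
      (hΓ.ncard_compl_neighborSet hconn hreg hk)
  obtain rfl : m = (k + 2) / 2 := by omega
  exact ⟨⟨k / 2, by omega⟩, hiso⟩

/-- A connected 2-distance-transitive graph of valency `k ≥ 3` with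
intersection number `b₁ = 1` has `k` even and is isomorphic to the complete multipartite
graph `K_{(k+2)/2 [2]}` with `(k+2)/2` parts of size `2`. -/
theorem stmt11 {V : Type*} [Fintype V] (Γ : SimpleGraph V) (k : ℕ) (hk : 3 ≤ k)
    (hconn : Γ.Connected)
    (hreg : ∀ v, (Γ.neighborSet v).ncard = k)
    (h2dt : TwoDistanceTransitive Γ)
    (hb₁ : ∀ u v, Γ.Adj u v → {w | Γ.Adj v w ∧ Γ.dist u w = 2}.ncard = 1) :
    Even k ∧
    Nonempty (Γ ≃g SimpleGraph.completeMultipartiteGraph (fun _ : Fin ((k + 2) / 2) => Fin 2)) :=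
  stmt11_general Γ k hk hconn hreg hb₁
end
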